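/- Let i = (i_1,...,i_n) be a sequence enumerating {1,...,n}, with γ_{i,k} = s_{i_n}···s_{i_{k+1}}(α_{i_k}) (and γ_{i,n}=α_{i_n}), and c = s_{i_n}···s_{i_1}. For the rotated sequence i' = (i_2,...,i_n,i_1) with γ_{i',k} defined analogously and c' = s_{i_1}s_{i_n}···s_{i_2}, one has for all s ≥ 0: s_{i_1}(c^{s}(γ_{i,k})) = c'^{s}(γ_{i',k-1}) for 2 ≤ k ≤ n, and s_{i_1}(c^{s}(γ_{i,1})) = c'^{s+1}(γ_{i',n}). -/
import Mathlib


/-- The simple reflection s_i on ℤ^n: s_i(α_j) = α_j − c_{ij} α_i on basis vectors. -/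
def reflS (n : ℕ) (C : Matrix (Fin n) (Fin n) ℤ) (i : Fin n) (x : Fin n → ℤ) : Fin n → ℤ :=
  fun k => x k - (if k = i then ∑ j, C i j * x j else 0)

/-- The simple root α_j (j-th standard basis vector). -/
def basisV (n : ℕ) (j : Fin n) : Fin n → ℤ := fun k => if k = j then 1 else 0

/-- Composite of simple reflections along a list, head acting outermost. -/
def applyL (n : ℕ) (C : Matrix (Fin n) (Fin n) ℤ) (L : List (Fin n)) (x : Fin n → ℤ) :
    Fin n → ℤ :=
  L.foldr (reflS n C) x

/-- γ_{i,k} (0-based: for a sequence L = (i₁,...,i_n),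
gammaVec L k = s_{i_n}⋯s_{i_{k+2}}(α_{i_{k+1}}), and gammaVec L (n-1) = α_{i_n}). -/
def gammaVec (n : ℕ) (C : Matrix (Fin n) (Fin n) ℤ) (dflt : Fin n)
    (L : List (Fin n)) (k : ℕ) : Fin n → ℤ :=
  applyL n C ((L.drop (k + 1)).reverse) (basisV n (L.getD k dflt))

lemma applyL_append (n : ℕ) (C : Matrix (Fin n) (Fin n) ℤ) (A B : List (Fin n))
    (x : Fin n → ℤ) : applyL n C (A ++ B) x = applyL n C A (applyL n C B x) := by
  simp [applyL, List.foldr_append]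

lemma applyL_cons (n : ℕ) (C : Matrix (Fin n) (Fin n) ℤ) (a : Fin n) (T : List (Fin n))
    (x : Fin n → ℤ) : applyL n C (a :: T) x = reflS n C a (applyL n C T x) := rfl

/-- s₁ ∘ c = c' ∘ s₁ -/
lemma comm_key (n : ℕ) (C : Matrix (Fin n) (Fin n) ℤ) (i₁ : Fin n) (rest : List (Fin n))
    (x : Fin n → ℤ) :
    reflS n C i₁ (applyL n C (i₁ :: rest).reverse x)
      = applyL n C (i₁ :: rest.reverse) (reflS n C i₁ x) := by
  have : (i₁ :: rest).reverse = rest.reverse ++ [i₁] := by simp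
  rw [this, applyL_append, applyL_cons]
  rfl

lemma comm_iter (n : ℕ) (C : Matrix (Fin n) (Fin n) ℤ) (i₁ : Fin n) (rest : List (Fin n))
    (s : ℕ) (x : Fin n → ℤ) :
    reflS n C i₁ ((applyL n C (i₁ :: rest).reverse)^[s] x)
      = (applyL n C (i₁ :: rest.reverse))^[s] (reflS n C i₁ x) := by
  induction s generalizing x with
  | zero => rfl
  | succ s ih =>
      rw [Function.iterate_succ_apply, Function.iterate_succ_apply, ih, comm_key]

/-- with c = s_{i_n}⋯s_{i_1} (applyL over the reversed list) and
c' = s_{i₁}s_{i_n}⋯s_{i₂} for the rotated sequence i' = (i₂,...,i_n,i₁), one has,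
for all s ≥ 0: s_{i₁}(c^s(γ_{i,k})) = c'^s(γ_{i',k-1}) for 2 ≤ k ≤ n (0-based:
1 ≤ k < n), and s_{i₁}(c^s(γ_{i,1})) = c'^{s+1}(γ_{i',n}). -/
theorem stmt_8 (n : ℕ) (C : Matrix (Fin n) (Fin n) ℤ) (hC : ∀ i, C i i = 2)
    (i₁ : Fin n) (rest : List (Fin n))
    (hlen : (i₁ :: rest).length = n) (henum : ∀ j : Fin n, j ∈ i₁ :: rest) :
    (∀ (s k : ℕ), 1 ≤ k → k < n →
      reflS n C i₁ ((applyL n C (i₁ :: rest).reverse)^[s] (gammaVec n C i₁ (i₁ :: rest) k))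
        = (applyL n C (i₁ :: rest.reverse))^[s] (gammaVec n C i₁ (rest ++ [i₁]) (k - 1))) ∧
    (∀ s : ℕ,
      reflS n C i₁ ((applyL n C (i₁ :: rest).reverse)^[s] (gammaVec n C i₁ (i₁ :: rest) 0))
        = (applyL n C (i₁ :: rest.reverse))^[s + 1] (gammaVec n C i₁ (rest ++ [i₁]) (n - 1))) := by
  have hrl : rest.length = n - 1 := by
    simp at hlen; omega
  constructor
  · intro s k hk1 hkn
    rw [comm_iter]
    congr 1
    obtain ⟨m, rfl⟩ : ∃ m, k = m + 1 := ⟨k - 1, by omega⟩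
    have hm : m < rest.length := by omega
    have hm1 : m + 1 ≤ rest.length := hm
    unfold gammaVec
    have hdrop : (rest ++ [i₁]).drop (m + 1 - 1 + 1) = rest.drop (m + 1) ++ [i₁] := by
      simp only [Nat.add_sub_cancel]
      rw [List.drop_append_of_le_length hm1]
    have hgetD : (rest ++ [i₁]).getD (m + 1 - 1) i₁ = rest.getD m i₁ := by
      simp [List.getD, List.getElem?_append_left hm]
    rw [hdrop, hgetD]
    have : (rest.drop (m + 1) ++ [i₁]).reverse = i₁ :: (rest.drop (m + 1)).reverse := by simp
    rw [this, applyL_cons]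
    simp [List.drop_succ_cons]
  · intro s
    rw [comm_iter, Function.iterate_succ_apply]
    congr 1
    unfold gammaVec
    have h1 : ((rest ++ [i₁]).drop (n - 1 + 1)) = [] := by
      apply List.drop_eq_nil_of_le
      simp [hrl]
    have h2 : (rest ++ [i₁]).getD (n - 1) i₁ = i₁ := by
      have : n - 1 = rest.length := hrl.symm
      rw [this]
      simp [List.getD]
    rw [h1, h2]
    have : (i₁ :: rest).drop (0 + 1) = rest := rfl
    rw [this]
    show applyL n C (i₁ :: rest.reverse) (basisV n i₁)
      = reflS n C i₁ (applyL n C rest.reverse (basisV n i₁))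
    rfl
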